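/- Every graph with no induced P_4 either has at most one vertex, or is disconnected, or its complement is disconnected. -/

import Mathlib

/-!
Induct on the number of vertices. Suppose `G` and `Gᶜ` are both connected and pick a vertex `v`.
As `P₄` is self-complementary, the induction hypothesis lets us assume that `G - v` is
disconnected (if `G - v` is a single vertex, `v` would be both adjacent and non-adjacent to it).
Since `Gᶜ` is connected, `v` has a non-neighbour `z`. Inside the component of `z` in `G - v` there
is an edge `b a` with `b ≁ v` and `a ∼ v`, and since `G` is connected, `v` has a neighbour `d` in
another component. Then `b - a - v - d` is an induced `P₄`.
-/

open SimpleGraph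

namespace SimpleGraph
variable {V : Type*} {G : SimpleGraph V}

/-- The complement of the path `0 - 1 - 2 - 3` is the path `2 - 0 - 3 - 1`. -/
lemma pathGraph_four_isIndContained_compl : pathGraph 4 ⊴ (pathGraph 4)ᶜ :=
  ⟨{ toFun := ![2, 0, 3, 1]
     inj' := by decide
     map_rel_iff' := fun {i j} => by
       simp only [Function.Embedding.coeFn_mk, compl_adj, pathGraph_adj]
       fin_cases i <;> fin_cases j <;> decide }⟩

lemma IsIndContained.pathGraph_four_of_compl (h : pathGraph 4 ⊴ Gᶜ) : pathGraph 4 ⊴ G :=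
  pathGraph_four_isIndContained_compl.trans (compl_compl G ▸ h.compl)

lemma pathGraph_four_isIndContained_of_adj {a b c d : V}
    (hab : G.Adj a b) (hbc : G.Adj b c) (hcd : G.Adj c d)
    (hac : ¬G.Adj a c) (had : ¬G.Adj a d) (hbd : ¬G.Adj b d) : pathGraph 4 ⊴ G := by
  have hac' : a ≠ c := by rintro rfl; exact had hcd
  have had' : a ≠ d := by rintro rfl; exact hac hcd.symm
  have hbd' : b ≠ d := by rintro rfl; exact had hab
  refine ⟨⟨⟨![a, b, c, d], fun i j hij => ?_⟩, fun {i j} => ?_⟩⟩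
  · fin_cases i <;> fin_cases j <;> simp_all [hab.ne, hbc.ne, hcd.ne, Ne.symm]
  · change G.Adj (![a, b, c, d] i) (![a, b, c, d] j) ↔ _
    rw [pathGraph_adj]
    fin_cases i <;> fin_cases j <;> simp [adj_comm, *]

lemma compl_induce (s : Set V) : (G.induce s)ᶜ = Gᶜ.induce s := by
  ext a b
  simp [Subtype.ext_iff]

variable {v : V}

lemma Preconnected.exists_adj_reachable_induce_compl_singleton (hG : G.Preconnected)
    (u : ({v}ᶜ : Set V)) :
    ∃ d : ({v}ᶜ : Set V), G.Adj v d ∧ (G.induce {v}ᶜ).Reachable u d := by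
  let S : Set V := {w | ∃ hw : w ≠ v, (G.induce {v}ᶜ).Reachable u ⟨w, hw⟩}
  obtain ⟨⟨⟨x, y⟩, hxy⟩, -, ⟨hxv, hux⟩, hyS⟩ :=
    (hG u v).some.exists_boundary_dart S ⟨u.2, .rfl⟩ fun h => h.1 rfl
  obtain rfl : y = v := by
    by_contra hyv
    exact hyS ⟨hyv, hux.trans (Adj.reachable hxy)⟩
  exact ⟨⟨x, hxv⟩, hxy.symm, hux⟩

lemma Preconnected.exists_adj_not_adj_reachable_induce_compl_singleton (hG : G.Preconnected)
    (z : ({v}ᶜ : Set V)) (hz : ¬G.Adj v z) :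
    ∃ a b : ({v}ᶜ : Set V),
      (G.induce {v}ᶜ).Reachable z b ∧ G.Adj b a ∧ G.Adj v a ∧ ¬G.Adj v b := by
  let S : Set V := {w | ¬G.Adj v w ∧ ∃ hw : w ≠ v, (G.induce {v}ᶜ).Reachable z ⟨w, hw⟩}
  obtain ⟨⟨⟨x, y⟩, hxy⟩, -, ⟨hvx, hxv, hzx⟩, hyS⟩ :=
    (hG z v).some.exists_boundary_dart S ⟨hz, z.2, .rfl⟩ fun h => h.2.1 rfl
  have hyv : y ≠ v := by
    rintro rfl
    exact hvx hxy.symm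
  have hvy : G.Adj v y := by
    by_contra hvy
    exact hyS ⟨hvy, hyv, hzx.trans (Adj.reachable hxy)⟩
  exact ⟨⟨y, hyv⟩, ⟨x, hxv⟩, hzx, hxy, hvy, hvx⟩

theorem Preconnected.pathGraph_four_isIndContained (hG : G.Preconnected) {z : V} (hz : z ≠ v)
    (hvz : ¬G.Adj v z) (hH : ¬(G.induce {v}ᶜ).Preconnected) : pathGraph 4 ⊴ G := by
  obtain ⟨a, b, hzb, hba, hva, hvb⟩ :=
    hG.exists_adj_not_adj_reachable_induce_compl_singleton ⟨z, hz⟩ hvz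
  obtain ⟨w, hzw⟩ : ∃ w, ¬(G.induce {v}ᶜ).Reachable ⟨z, hz⟩ w := by
    obtain ⟨x, y, hxy⟩ : ∃ x y, ¬(G.induce {v}ᶜ).Reachable x y := by
      simpa [Preconnected] using hH
    by_cases hzx : (G.induce {v}ᶜ).Reachable ⟨z, hz⟩ x
    · exact ⟨y, fun hzy => hxy (hzx.symm.trans hzy)⟩
    · exact ⟨x, hzx⟩
  obtain ⟨d, hvd, hwd⟩ := hG.exists_adj_reachable_induce_compl_singleton w
  have hzd : ¬(G.induce {v}ᶜ).Reachable ⟨z, hz⟩ d := fun h => hzw (h.trans hwd.symm)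
  exact pathGraph_four_isIndContained_of_adj hba hva.symm hvd (fun h => hvb h.symm)
    (fun h => hzd (hzb.trans (Adj.reachable h)))
    (fun h => hzd ((hzb.trans (Adj.reachable hba)).trans (Adj.reachable h)))

end SimpleGraph

/-- Every `P₄`-free graph either has at most one vertex, or is disconnected, or its
complement is disconnected. -/
theorem p4_free_structure {V : Type*} [Fintype V] (G : SimpleGraph V)
    (h : IsEmpty (SimpleGraph.pathGraph 4 ↪g G)) :
    Fintype.card V ≤ 1 ∨ ¬ G.Preconnected ∨ ¬ (Gᶜ).Preconnected := by
  classical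
  induction hn : Fintype.card V using Nat.strong_induction_on generalizing V with
  | _ n ih =>
  subst hn
  by_contra! ⟨hcard, hG, hGc⟩
  have : Nontrivial V := Fintype.one_lt_card_iff_nontrivial.mp hcard
  obtain ⟨v⟩ := ‹Nontrivial V›.to_nonempty
  obtain ⟨a, hva⟩ := hG.exists_adj_of_nontrivial v
  obtain ⟨b, hvb⟩ := hGc.exists_adj_of_nontrivial v
  have hfree : ¬pathGraph 4 ⊴ G := not_nonempty_iff.mpr h
  have hfree' : IsEmpty (pathGraph 4 ↪g G.induce {v}ᶜ) :=
    not_nonempty_iff.mp fun hP => hfree (IsIndContained.trans hP ⟨Embedding.induce _⟩)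
  rcases ih _ (Fintype.card_subtype_lt (x := v) (by simp)) (G.induce {v}ᶜ) hfree' rfl
    with hsmall | hH | hHc
  · have : Subsingleton ({v}ᶜ : Set V) := Fintype.card_le_one_iff_subsingleton.mp hsmall
    have hab : a = b := congrArg Subtype.val
      (Subsingleton.elim (⟨a, hva.ne'⟩ : ({v}ᶜ : Set V)) ⟨b, hvb.ne'⟩)
    exact hvb.2 (hab ▸ hva)
  · exact hfree (hG.pathGraph_four_isIndContained hvb.ne' hvb.2 hH)
  · rw [compl_induce] at hHc
    exact hfree
      (hGc.pathGraph_four_isIndContained hva.ne' (fun h => h.2 hva) hHc).pathGraph_four_of_compl
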